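/- arXiv:1303.1208 — 5 statements merged into one kernel-verified Lean document; each statement's English description precedes it below -/
import Mathlib

section
/- Let π₀, π₁ ∈ [0,1) with π₀ + π₁ < 1, and let γ ≥ 0. Define λ = (π₁ + γ(1-π₁))/(1 - π₀ + γπ₀). Let p₀, p₁ be nonnegative functions (densities) and define p̃₀ = (1-π₀)p₀ + π₀p₁ and p̃₁ = (1-π₁)p₁ + π₁p₀. Then for every x with p₀(x) > 0 and p̃₀(x) > 0, one has p₁(x)/p₀(x) > γ if and only if p̃₁(x)/p̃₀(x) > λ. -/
/-! Clearing denominators, `D p̃₁ - N p̃₀ = (1 - π₀ - π₁) (p₁ - γ p₀)`, where `λ = N / D`.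
Since `1 - π₀ - π₁ > 0` and `D > 0`, the two tests compare quantities of the same sign. -/

theorem mixture_cross_sub_eq {R : Type*} [CommRing R] (π₀ π₁ γ a b : R) :
    (1 - π₀ + γ * π₀) * ((1 - π₁) * b + π₁ * a)
        - (π₁ + γ * (1 - π₁)) * ((1 - π₀) * a + π₀ * b)
      = (1 - π₀ - π₁) * (b - γ * a) := by
  ring

theorem div_lt_div_iff_pos_of_cross_sub_eq {K : Type*} [Field K] [LinearOrder K]
    [IsStrictOrderedRing K] {n d u v c s : K} (hd : 0 < d) (hv : 0 < v) (hc : 0 < c)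
    (h : d * u - n * v = c * s) : n / d < u / v ↔ 0 < s := by
  rw [div_lt_div_iff₀ hd hv, ← sub_pos, mul_comm u d, h, mul_pos_iff_of_pos_left hc]

theorem lrt_threshold_transform_general {X : Type*} (π₀ π₁ γ lam : ℝ)
    (hπ₀ : π₀ ∈ Set.Ico (0:ℝ) 1)
    (hsum : π₀ + π₁ < 1) (hγ : 0 ≤ γ)
    (hlam : lam = (π₁ + γ * (1 - π₁)) / (1 - π₀ + γ * π₀))
    (p₀ p₁ : X → ℝ)
    (x : X) (hx : 0 < p₀ x) (hx' : 0 < (1 - π₀) * p₀ x + π₀ * p₁ x) :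
    p₁ x / p₀ x > γ ↔
      ((1 - π₁) * p₁ x + π₁ * p₀ x) / ((1 - π₀) * p₀ x + π₀ * p₁ x) > lam := by
  subst hlam
  have hD : 0 < 1 - π₀ + γ * π₀ :=
    add_pos_of_pos_of_nonneg (sub_pos.2 hπ₀.2) (mul_nonneg hγ hπ₀.1)
  have hnoise : 0 < 1 - π₀ - π₁ := by linarith
  rw [gt_iff_lt, gt_iff_lt, div_lt_div_iff_pos_of_cross_sub_eq hD hx' hnoise
    (mixture_cross_sub_eq π₀ π₁ γ (p₀ x) (p₁ x)), lt_div_iff₀ hx, sub_pos]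

theorem lrt_threshold_transform {X : Type*} (π₀ π₁ γ lam : ℝ)
    (hπ₀ : π₀ ∈ Set.Ico (0:ℝ) 1) (hπ₁ : π₁ ∈ Set.Ico (0:ℝ) 1)
    (hsum : π₀ + π₁ < 1) (hγ : 0 ≤ γ)
    (hlam : lam = (π₁ + γ * (1 - π₁)) / (1 - π₀ + γ * π₀))
    (p₀ p₁ : X → ℝ) (hp₀ : ∀ x, 0 ≤ p₀ x) (hp₁ : ∀ x, 0 ≤ p₁ x)
    (x : X) (hx : 0 < p₀ x) (hx' : 0 < (1 - π₀) * p₀ x + π₀ * p₁ x) :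
    p₁ x / p₀ x > γ ↔
      ((1 - π₁) * p₁ x + π₁ * p₀ x) / ((1 - π₀) * p₀ x + π₀ * p₁ x) > lam :=
  lrt_threshold_transform_general π₀ π₁ γ lam hπ₀ hsum hγ hlam p₀ p₁ x hx hx'
end

section
/- Let π₀, π₁ ∈ [0,1) with π₀ + π₁ < 1, and let P₀ ≠ P₁ be probability measures. Define P̃₀ = (1-π₀)P₀ + π₀P₁ and P̃₁ = (1-π₁)P₁ + π₁P₀. Then with π̃₀ = π₀/(1-π₁) and π̃₁ = π₁/(1-π₀), one has π̃₀, π̃₁ ∈ [0,1), P̃₀ = (1-π̃₀)P₀ + π̃₀P̃₁, and P̃₁ = (1-π̃₁)P₁ + π̃₁P̃₀. Moreover, these values of π̃₀, π̃₁ are the unique ones in [0,1) for which these two identities hold. -/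
open MeasureTheory

/-- The mixture `(1-a)·P + a·Q` of two measures. -/
noncomputable def mix {X : Type*} [MeasurableSpace X] (a : ℝ) (P Q : Measure X) :
    Measure X :=
  ENNReal.ofReal (1 - a) • P + ENNReal.ofReal a • Q

/-- `G` is irreducible with respect to `H`: no decomposition `G = γ·H + (1-γ)·F'`
with `F'` a probability measure and `0 < γ ≤ 1`. -/
def Irred {X : Type*} [MeasurableSpace X] (G H : Measure X) : Prop :=
  ¬ ∃ (γ : ℝ) (F' : Measure X), IsProbabilityMeasure F' ∧ 0 < γ ∧ γ ≤ 1 ∧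
      G = mix γ F' H

/-- Mutual irreducibility. -/
def MutIrred {X : Type*} [MeasurableSpace X] (P Q : Measure X) : Prop :=
  Irred P Q ∧ Irred Q P

/-- The set of feasible mixture proportions of `H` in `F`. -/
def nuSet {X : Type*} [MeasurableSpace X] (F H : Measure X) : Set ℝ :=
  {α | α ∈ Set.Icc (0:ℝ) 1 ∧
    ∃ G' : Measure X, IsProbabilityMeasure G' ∧ F = mix α G' H}

/-- `ν*(F,H)`: the maximal proportion of `H` in `F`. -/
noncomputable def nuStar {X : Type*} [MeasurableSpace X] (F H : Measure X) : ℝ :=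
  sSup (nuSet F H)

/-! Substituting `P̃₁ = mix π₁ P₁ P₀` into `mix a P₀ P̃₁` collapses it to `mix (a (1 - π₁)) P₀ P₁`,
so the identity for `P̃₀` holds exactly when `a (1 - π₁) = π₀`: evaluating on a set where
`P₀` and `P₁` differ shows that the weight of a mixture of two distinct finite measures is
determined by the mixture. -/

lemma mix_mix {X : Type*} [MeasurableSpace X] {a c : ℝ} (ha : a ∈ Set.Icc (0:ℝ) 1)
    (hc : 0 ≤ c) (P Q : Measure X) :
    mix a P (mix c Q P) = mix (a * (1 - c)) P Q := by
  obtain ⟨ha0, ha1⟩ := ha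
  have hcoeff : ENNReal.ofReal (1 - a) + ENNReal.ofReal (a * c)
      = ENNReal.ofReal (1 - a * (1 - c)) := by
    rw [← ENNReal.ofReal_add (by linarith) (by positivity)]
    ring_nf
  unfold mix
  rw [smul_add, smul_smul, smul_smul, ← ENNReal.ofReal_mul ha0, ← ENNReal.ofReal_mul ha0,
    ← hcoeff, add_smul]
  abel

lemma measureReal_mix {X : Type*} [MeasurableSpace X] {a : ℝ} (ha : a ∈ Set.Icc (0:ℝ) 1)
    (P Q : Measure X) [IsFiniteMeasure P] [IsFiniteMeasure Q] (A : Set X) :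
    (mix a P Q).real A = (1 - a) * P.real A + a * Q.real A := by
  obtain ⟨ha0, ha1⟩ := ha
  simp only [mix, measureReal_def, Measure.coe_add, Pi.add_apply, Measure.smul_apply,
    smul_eq_mul]
  rw [ENNReal.toReal_add (by finiteness) (by finiteness), ENNReal.toReal_mul,
    ENNReal.toReal_mul, ENNReal.toReal_ofReal (by linarith), ENNReal.toReal_ofReal ha0]

lemma mix_injOn {X : Type*} [MeasurableSpace X] {P Q : Measure X}
    [IsFiniteMeasure P] [IsFiniteMeasure Q] (hne : P ≠ Q) :
    Set.InjOn (fun a => mix a P Q) (Set.Icc 0 1) := by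
  intro a ha b hb hab
  obtain ⟨A, -, hA⟩ : ∃ A, MeasurableSet A ∧ P A ≠ Q A := by
    by_contra! h
    exact hne (Measure.ext h)
  have hPQ : P.real A ≠ Q.real A := fun h =>
    hA ((ENNReal.toReal_eq_toReal_iff' (by finiteness) (by finiteness)).mp h)
  have hA_eq := congrArg (fun μ : Measure X => μ.real A) hab
  simp only [measureReal_mix ha, measureReal_mix hb] at hA_eq
  have : (a - b) * (Q.real A - P.real A) = 0 := by linarith
  exact sub_eq_zero.mp ((mul_eq_zero.mp this).resolve_right (sub_ne_zero.mpr hPQ.symm))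

lemma div_one_sub_mem_Ico {x y : ℝ} (hx : 0 ≤ x) (hxy : x + y < 1) :
    x / (1 - y) ∈ Set.Ico (0:ℝ) 1 := by
  have hy : 0 < 1 - y := by linarith
  exact ⟨div_nonneg hx hy.le, (div_lt_one hy).mpr (by linarith)⟩

lemma mix_eq_mix_div_mix {X : Type*} [MeasurableSpace X] {x y : ℝ} (hx : 0 ≤ x) (hy : 0 ≤ y)
    (hxy : x + y < 1) (P Q : Measure X) :
    mix x P Q = mix (x / (1 - y)) P (mix y Q P) := by
  obtain ⟨h0, h1⟩ := div_one_sub_mem_Ico hx hxy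
  rw [mix_mix ⟨h0, h1.le⟩ hy, div_mul_cancel₀ _ (by linarith)]

lemma eq_div_of_mix_eq_mix_mix {X : Type*} [MeasurableSpace X] {P Q : Measure X}
    [IsFiniteMeasure P] [IsFiniteMeasure Q] (hne : P ≠ Q) {x y a : ℝ}
    (hx : x ∈ Set.Icc (0:ℝ) 1) (hy : y ∈ Set.Ico (0:ℝ) 1) (ha : a ∈ Set.Icc (0:ℝ) 1)
    (h : mix x P Q = mix a P (mix y Q P)) :
    a = x / (1 - y) := by
  obtain ⟨hy0, hy1⟩ := hy
  obtain ⟨ha0, ha1⟩ := ha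
  rw [mix_mix ⟨ha0, ha1⟩ hy0] at h
  have hx_eq : x = a * (1 - y) :=
    mix_injOn hne hx ⟨by nlinarith, by nlinarith⟩ h
  rw [eq_div_iff (by linarith), hx_eq]

theorem decoupled_representation {X : Type*} [MeasurableSpace X] (π₀ π₁ : ℝ)
    (hπ₀ : π₀ ∈ Set.Ico (0:ℝ) 1) (hπ₁ : π₁ ∈ Set.Ico (0:ℝ) 1)
    (hsum : π₀ + π₁ < 1)
    (P₀ P₁ Pt₀ Pt₁ : Measure X)
    [IsProbabilityMeasure P₀] [IsProbabilityMeasure P₁]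
    (hne : P₀ ≠ P₁)
    (hPt₀ : Pt₀ = mix π₀ P₀ P₁) (hPt₁ : Pt₁ = mix π₁ P₁ P₀) :
    (π₀ / (1 - π₁)) ∈ Set.Ico (0:ℝ) 1 ∧ (π₁ / (1 - π₀)) ∈ Set.Ico (0:ℝ) 1 ∧
    Pt₀ = mix (π₀ / (1 - π₁)) P₀ Pt₁ ∧ Pt₁ = mix (π₁ / (1 - π₀)) P₁ Pt₀ ∧
    ∀ a b : ℝ, a ∈ Set.Ico (0:ℝ) 1 → b ∈ Set.Ico (0:ℝ) 1 →
      Pt₀ = mix a P₀ Pt₁ → Pt₁ = mix b P₁ Pt₀ →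
      a = π₀ / (1 - π₁) ∧ b = π₁ / (1 - π₀) := by
  have hsum' : π₁ + π₀ < 1 := by linarith
  subst hPt₀ hPt₁
  refine ⟨div_one_sub_mem_Ico hπ₀.1 hsum, div_one_sub_mem_Ico hπ₁.1 hsum',
    mix_eq_mix_div_mix hπ₀.1 hπ₁.1 hsum P₀ P₁, mix_eq_mix_div_mix hπ₁.1 hπ₀.1 hsum' P₁ P₀,
    fun a b ha hb h₀ h₁ => ⟨?_, ?_⟩⟩
  · exact eq_div_of_mix_eq_mix_mix hne (Set.Ico_subset_Icc_self hπ₀) hπ₁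
      (Set.Ico_subset_Icc_self ha) h₀
  · exact eq_div_of_mix_eq_mix_mix hne.symm (Set.Ico_subset_Icc_self hπ₁) hπ₀
      (Set.Ico_subset_Icc_self hb) h₁
end

section
/- Let F and H be probability measures on a measurable space with F ≠ H. Then there exists a unique ν* ∈ [0,1) and a probability measure G such that F = (1-ν*)G + ν*H and G is irreducible with respect to H. Moreover ν* equals the maximum of the set {α ∈ [0,1] : there exists a probability measure G' with F = (1-α)G' + αH}. -/
open MeasureTheory

/-!
The proportions `α` of `H` that can be split off `F` are exactly the `α < 1` with `α • H ≤ F`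
(`α = 1` would force `F = H`). This condition is preserved under suprema, so `ν*(F, H)` is
attained and is `< 1`. If `F = (1 - ν) G + ν H` and `G = (1 - γ) G' + γ H`, then
`F = (1 - ν') G' + ν' H` with `ν' = ν + γ (1 - ν)`; conversely a larger proportion `α > ν` in `F`
leaves the proportion `(α - ν) / (1 - ν)` of `H` in `G`. Hence `G` is irreducible with respect
to `H` exactly when `ν` is maximal, and `G` is determined by `ν` since mixing with `H` can be
cancelled.
-/

section Mixture

variable {X : Type*} [MeasurableSpace X]

@[simp]
lemma mix_apply (a : ℝ) (P Q : Measure X) (s : Set X) :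
    mix a P Q s = ENNReal.ofReal (1 - a) * P s + ENNReal.ofReal a * Q s := by
  simp [mix]

@[simp]
lemma mix_zero (P Q : Measure X) : mix 0 P Q = P := by
  simp [mix]

@[simp]
lemma mix_one (P Q : Measure X) : mix 1 P Q = Q := by
  simp [mix]

lemma smul_le_mix (a : ℝ) (P Q : Measure X) : ENNReal.ofReal a • Q ≤ mix a P Q :=
  Measure.le_add_left le_rfl

lemma mix_mix_s5 {a b : ℝ} (ha0 : 0 ≤ a) (ha1 : a ≤ 1) (hb0 : 0 ≤ b) (P Q : Measure X) :
    mix a (mix b P Q) Q = mix (a + b * (1 - a)) P Q := by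
  have h_left : ENNReal.ofReal (1 - a) * ENNReal.ofReal (1 - b) =
      ENNReal.ofReal (1 - (a + b * (1 - a))) := by
    rw [← ENNReal.ofReal_mul (by linarith)]
    congr 1
    ring
  have h_right : ENNReal.ofReal (1 - a) * ENNReal.ofReal b + ENNReal.ofReal a =
      ENNReal.ofReal (a + b * (1 - a)) := by
    rw [← ENNReal.ofReal_mul (by linarith), ← ENNReal.ofReal_add (by nlinarith) ha0]
    congr 1
    ring
  ext s -
  simp only [mix_apply, ← h_left, ← h_right]
  ring

lemma mix_left_injective {a : ℝ} (ha : a < 1) (Q : Measure X) [IsFiniteMeasure Q] :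
    Function.Injective fun P => mix a P Q := by
  intro P P' h
  have hc : ENNReal.ofReal (1 - a) ≠ 0 := (ENNReal.ofReal_pos.2 (by linarith)).ne'
  ext s -
  have hs := congrArg (· s) h
  simp only [mix_apply] at hs
  rw [ENNReal.add_left_inj (ENNReal.mul_ne_top ENNReal.ofReal_ne_top (measure_ne_top Q s))] at hs
  exact (ENNReal.mul_right_inj hc ENNReal.ofReal_ne_top).1 hs

lemma exists_eq_mix_of_smul_le {P Q : Measure X} [IsProbabilityMeasure P]
    [IsProbabilityMeasure Q] {a : ℝ} (ha0 : 0 ≤ a) (ha1 : a < 1)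
    (hle : ENNReal.ofReal a • Q ≤ P) :
    ∃ R : Measure X, IsProbabilityMeasure R ∧ P = mix a R Q := by
  have hc : ENNReal.ofReal (1 - a) ≠ 0 := (ENNReal.ofReal_pos.2 (by linarith)).ne'
  have := isFiniteMeasure_of_le P hle
  have hD : (P - ENNReal.ofReal a • Q) Set.univ = ENNReal.ofReal (1 - a) := by
    rw [Measure.sub_apply MeasurableSet.univ hle, Measure.smul_apply, smul_eq_mul,
      measure_univ, measure_univ, mul_one, ENNReal.ofReal_sub 1 ha0, ENNReal.ofReal_one]
  refine ⟨(ENNReal.ofReal (1 - a))⁻¹ • (P - ENNReal.ofReal a • Q), ⟨?_⟩, ?_⟩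
  · rw [Measure.smul_apply, smul_eq_mul, hD, ENNReal.inv_mul_cancel hc ENNReal.ofReal_ne_top]
  · rw [mix, smul_smul, ENNReal.mul_inv_cancel hc ENNReal.ofReal_ne_top, one_smul,
      Measure.sub_add_cancel_of_le hle]

lemma smul_le_of_smul_le_mix {a b : ℝ} (ha0 : 0 ≤ a) (ha1 : a < 1) (hab : a ≤ b)
    {P Q : Measure X} [IsFiniteMeasure Q] (h : ENNReal.ofReal b • Q ≤ mix a P Q) :
    ENNReal.ofReal ((b - a) / (1 - a)) • Q ≤ P := by
  have hc : ENNReal.ofReal (1 - a) ≠ 0 := (ENNReal.ofReal_pos.2 (by linarith)).ne'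
  have h_split : ENNReal.ofReal b = ENNReal.ofReal (b - a) + ENNReal.ofReal a := by
    rw [← ENNReal.ofReal_add (by linarith) ha0, sub_add_cancel]
  have h_scale : ENNReal.ofReal (1 - a) * ENNReal.ofReal ((b - a) / (1 - a)) =
      ENNReal.ofReal (b - a) := by
    rw [← ENNReal.ofReal_mul (by linarith), mul_div_cancel₀ _ (by linarith)]
  refine Measure.le_iff'.2 fun s => ?_
  have hs := Measure.le_iff'.1 h s
  rw [Measure.smul_apply, smul_eq_mul, mix_apply, h_split, add_mul,
    ENNReal.add_le_add_iff_right (ENNReal.mul_ne_top ENNReal.ofReal_ne_top (measure_ne_top Q s))]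
    at hs
  rw [Measure.smul_apply, smul_eq_mul, ← ENNReal.mul_le_mul_iff_right hc ENNReal.ofReal_ne_top,
    ← mul_assoc, h_scale]
  exact hs

lemma smul_sSup_le {S : Set ℝ} (hS : S.Nonempty) (hS' : BddAbove S) {μ ν : Measure X}
    (h : ∀ a ∈ S, ENNReal.ofReal a • μ ≤ ν) : ENNReal.ofReal (sSup S) • μ ≤ ν := by
  have h_sSup : ENNReal.ofReal (sSup S) = ⨆ a : S, ENNReal.ofReal a := by
    rw [Monotone.map_csSup_of_continuousAt ENNReal.continuous_ofReal.continuousAt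
      ENNReal.ofReal_mono hS hS', sSup_image']
  refine Measure.le_iff'.2 fun s => ?_
  rw [Measure.smul_apply, smul_eq_mul, h_sSup, ENNReal.iSup_mul]
  exact iSup_le fun a => Measure.le_iff'.1 (h a a.2) s

end Mixture

section Proportion

variable {X : Type*} [MeasurableSpace X] {F H : Measure X}

lemma zero_mem_nuSet (F H : Measure X) [IsProbabilityMeasure F] : (0 : ℝ) ∈ nuSet F H :=
  ⟨⟨le_rfl, zero_le_one⟩, F, inferInstance, (mix_zero F H).symm⟩

lemma bddAbove_nuSet (F H : Measure X) : BddAbove (nuSet F H) :=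
  ⟨1, fun _ ha => ha.1.2⟩

variable [IsProbabilityMeasure F] [IsProbabilityMeasure H]

lemma mem_nuSet_iff (hne : F ≠ H) {a : ℝ} :
    a ∈ nuSet F H ↔ 0 ≤ a ∧ a < 1 ∧ ENNReal.ofReal a • H ≤ F := by
  constructor
  · rintro ⟨⟨ha0, ha1⟩, G, -, rfl⟩
    refine ⟨ha0, ha1.lt_of_ne ?_, smul_le_mix a G H⟩
    rintro rfl
    exact hne (mix_one G H)
  · rintro ⟨ha0, ha1, hle⟩
    obtain ⟨G, hG, hF⟩ := exists_eq_mix_of_smul_le ha0 ha1 hle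
    exact ⟨⟨ha0, ha1.le⟩, G, hG, hF⟩

lemma nuStar_mem_nuSet (hne : F ≠ H) : nuStar F H ∈ nuSet F H := by
  have hS : (nuSet F H).Nonempty := ⟨0, zero_mem_nuSet F H⟩
  have h0 : 0 ≤ nuStar F H := le_csSup (bddAbove_nuSet F H) (zero_mem_nuSet F H)
  have hle : ENNReal.ofReal (nuStar F H) • H ≤ F :=
    smul_sSup_le hS (bddAbove_nuSet F H) fun a ha => ((mem_nuSet_iff hne).1 ha).2.2
  have hlt : nuStar F H < 1 := by
    refine (show nuStar F H ≤ 1 from csSup_le hS fun _ ha => ha.1.2).lt_of_ne fun h1 => hne ?_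
    rw [h1, ENNReal.ofReal_one, one_smul] at hle
    exact (Measure.eq_of_le_of_isProbabilityMeasure hle).symm
  exact (mem_nuSet_iff hne).2 ⟨h0, hlt, hle⟩

lemma isGreatest_nuStar (hne : F ≠ H) : IsGreatest (nuSet F H) (nuStar F H) :=
  ⟨nuStar_mem_nuSet hne, fun _ ha => le_csSup (bddAbove_nuSet F H) ha⟩

lemma irred_iff_isGreatest (hne : F ≠ H) {G : Measure X} [IsProbabilityMeasure G] {ν : ℝ}
    (hν0 : 0 ≤ ν) (hν1 : ν < 1) (hF : F = mix ν G H) :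
    Irred G H ↔ IsGreatest (nuSet F H) ν := by
  constructor
  · intro hirr
    refine ⟨⟨⟨hν0, hν1.le⟩, G, inferInstance, hF⟩, fun a ha => ?_⟩
    by_contra! hνa
    obtain ⟨-, ha1, hle⟩ := (mem_nuSet_iff hne).1 ha
    have hγ0 : 0 < (a - ν) / (1 - ν) := div_pos (by linarith) (by linarith)
    have hγ1 : (a - ν) / (1 - ν) < 1 := (div_lt_one (by linarith)).2 (by linarith)
    obtain ⟨G', hG', hG⟩ := exists_eq_mix_of_smul_le hγ0.le hγ1
      (smul_le_of_smul_le_mix hν0 hν1 hνa.le (hF ▸ hle))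
    exact hirr ⟨_, G', hG', hγ0, hγ1.le, hG⟩
  · rintro hmax ⟨γ, G', hG', hγ0, hγ1, rfl⟩
    have hmem : ν + γ * (1 - ν) ∈ nuSet F H :=
      ⟨⟨by nlinarith, by nlinarith⟩, G', hG', hF.trans (mix_mix_s5 hν0 hν1.le hγ0.le G' H)⟩
    nlinarith [hmax.2 hmem]

end Proportion

theorem canonical_decomposition {X : Type*} [MeasurableSpace X]
    (F H : Measure X) [IsProbabilityMeasure F] [IsProbabilityMeasure H]
    (hne : F ≠ H) :
    (∃! p : ℝ × Measure X,
        p.1 ∈ Set.Ico (0:ℝ) 1 ∧ IsProbabilityMeasure p.2 ∧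
        F = mix p.1 p.2 H ∧ Irred p.2 H) ∧
    ∀ p : ℝ × Measure X,
      (p.1 ∈ Set.Ico (0:ℝ) 1 ∧ IsProbabilityMeasure p.2 ∧
        F = mix p.1 p.2 H ∧ Irred p.2 H) →
      IsGreatest (nuSet F H) p.1 := by
  have h_max : ∀ p : ℝ × Measure X,
      (p.1 ∈ Set.Ico (0:ℝ) 1 ∧ IsProbabilityMeasure p.2 ∧
        F = mix p.1 p.2 H ∧ Irred p.2 H) →
      IsGreatest (nuSet F H) p.1 := by
    rintro ⟨ν, G⟩ ⟨⟨hν0, hν1⟩, hG, hF, hirr⟩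
    exact (irred_iff_isGreatest hne hν0 hν1 hF).1 hirr
  obtain ⟨⟨h0, -⟩, G, hG, hF⟩ := nuStar_mem_nuSet hne
  have hlt : nuStar F H < 1 := ((mem_nuSet_iff hne).1 (nuStar_mem_nuSet hne)).2.1
  have hirr : Irred G H := (irred_iff_isGreatest hne h0 hlt hF).2 (isGreatest_nuStar hne)
  refine ⟨⟨(nuStar F H, G), ⟨⟨h0, hlt⟩, hG, hF, hirr⟩, ?_⟩, h_max⟩
  rintro ⟨ν, G'⟩ hp
  obtain rfl : ν = nuStar F H := (h_max _ hp).unique (isGreatest_nuStar hne)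
  exact Prod.ext rfl (mix_left_injective hlt H (hp.2.2.1.symm.trans hF))
end

section
/- Let π₁ ∈ [0,1], let P₀, P₁ be probability measures, and set P̃₁ = (1-π₁)P₁ + π₁P₀. Then P₀ is irreducible with respect to P̃₁ if and only if P₀ is irreducible with respect to P₁ and π₁ < 1. -/
open MeasureTheory

/-!
Writing `π = π₁`, a decomposition `P₀ = (1-γ) F + γ ((1-π) P₁ + π P₀)` can be solved for `P₀`,
giving `P₀ = (1-γ') F + γ' P₁` with `γ' = γ (1-π) / (1-γπ)`, and conversely. For `π < 1` the map
`γ ↦ γ'` sends `(0,1]` onto `(0,1]`, so the two irreducibility statements are equivalent. For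
`π = 1` the contaminated measure is `P₀` itself, and `P₀ = 1 · P₀` is a forbidden decomposition.
-/

noncomputable def absorbWeight (π γ : ℝ) : ℝ :=
  γ * (1 - π) / (1 - γ * π)

section AbsorbWeight

variable {π : ℝ}

lemma mapsTo_Ioc_absorbWeight (hπ : π < 1) :
    Set.MapsTo (absorbWeight π) (Set.Ioc 0 1) (Set.Ioc 0 1) := by
  rintro γ ⟨hγ0, hγ1⟩
  unfold absorbWeight
  have hden : 0 < 1 - γ * π := by nlinarith
  exact ⟨div_pos (by nlinarith) hden, (div_le_one hden).2 (by nlinarith)⟩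

lemma surjOn_Ioc_absorbWeight (hπ : π < 1) :
    Set.SurjOn (absorbWeight π) (Set.Ioc 0 1) (Set.Ioc 0 1) := by
  rintro γ' ⟨hγ'0, hγ'1⟩
  have hden : 0 < 1 - π + π * γ' := by nlinarith
  refine ⟨γ' / (1 - π + π * γ'), ⟨div_pos hγ'0 hden, (div_le_one hden).2 (by nlinarith)⟩, ?_⟩
  have hrest : 1 - γ' / (1 - π + π * γ') * π = (1 - π) / (1 - π + π * γ') := by
    rw [div_mul_eq_mul_div, one_sub_div hden.ne']
    ring_nf
  rw [absorbWeight, hrest, div_mul_eq_mul_div, div_div_div_cancel_right₀ hden.ne', mul_div_assoc,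
    div_self (sub_pos.2 hπ).ne', mul_one]

end AbsorbWeight

section Mix

variable {X : Type*} [MeasurableSpace X]

lemma MeasureTheory.Measure.ext_iff_measureReal {μ ν : Measure X} [IsFiniteMeasure μ]
    [IsFiniteMeasure ν] : μ = ν ↔ ∀ s, MeasurableSet s → μ.real s = ν.real s := by
  rw [Measure.ext_iff]
  exact forall₂_congr fun _ _ ↦
    (measureReal_eq_measureReal_iff (measure_ne_top _ _) (measure_ne_top _ _)).symm

instance mix.instIsFiniteMeasure (a : ℝ) (P Q : Measure X) [IsFiniteMeasure P]
    [IsFiniteMeasure Q] : IsFiniteMeasure (mix a P Q) :=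
  ⟨by simp [mix, ENNReal.mul_lt_top, measure_lt_top]⟩

lemma mix_real_apply {a : ℝ} (h0 : 0 ≤ a) (h1 : a ≤ 1) (P Q : Measure X) [IsFiniteMeasure P]
    [IsFiniteMeasure Q] (s : Set X) :
    (mix a P Q).real s = (1 - a) * P.real s + a * Q.real s := by
  rw [mix, measureReal_add_apply (ENNReal.mul_ne_top ENNReal.ofReal_ne_top (measure_ne_top _ _))
      (ENNReal.mul_ne_top ENNReal.ofReal_ne_top (measure_ne_top _ _)),
    measureReal_ennreal_smul_apply, measureReal_ennreal_smul_apply,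
    ENNReal.toReal_ofReal (by linarith), ENNReal.toReal_ofReal h0]

lemma not_irred_self (G : Measure X) [IsProbabilityMeasure G] : ¬ Irred G G :=
  fun h ↦ h ⟨1, G, inferInstance, one_pos, le_rfl, (mix_one G G).symm⟩

lemma eq_mix_mix_self_iff {γ π : ℝ} (hγ0 : 0 ≤ γ) (hγ1 : γ ≤ 1) (hπ0 : 0 ≤ π) (hπ1 : π ≤ 1)
    (hγπ : γ * π < 1) (G F H : Measure X) [IsFiniteMeasure G] [IsFiniteMeasure F]
    [IsFiniteMeasure H] :
    G = mix γ F (mix π H G) ↔ G = mix (absorbWeight π γ) F H := by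
  unfold absorbWeight
  have hden : 0 < 1 - γ * π := by linarith
  have hw0 : 0 ≤ γ * (1 - π) / (1 - γ * π) := div_nonneg (by nlinarith) hden.le
  have hw1 : γ * (1 - π) / (1 - γ * π) ≤ 1 := (div_le_one hden).2 (by nlinarith)
  simp only [Measure.ext_iff_measureReal, mix_real_apply hγ0 hγ1, mix_real_apply hπ0 hπ1,
    mix_real_apply hw0 hw1]
  refine forall₂_congr fun s _ ↦ ?_
  field_simp
  constructor <;> intro h <;> linarith

lemma irred_mix_self_iff {π : ℝ} (hπ0 : 0 ≤ π) (hπ1 : π < 1) (G H : Measure X)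
    [IsFiniteMeasure G] [IsFiniteMeasure H] : Irred G (mix π H G) ↔ Irred G H := by
  refine not_congr ⟨?_, ?_⟩
  · rintro ⟨γ, F, hF, hγ0, hγ1, hG⟩
    obtain ⟨hw0, hw1⟩ := mapsTo_Ioc_absorbWeight hπ1 ⟨hγ0, hγ1⟩
    exact ⟨_, F, hF, hw0, hw1,
      (eq_mix_mix_self_iff hγ0.le hγ1 hπ0 hπ1.le (by nlinarith) G F H).1 hG⟩
  · rintro ⟨γ', F, hF, hγ'0, hγ'1, hG⟩
    obtain ⟨γ, ⟨hγ0, hγ1⟩, rfl⟩ := surjOn_Ioc_absorbWeight hπ1 ⟨hγ'0, hγ'1⟩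
    exact ⟨γ, F, hF, hγ0, hγ1,
      (eq_mix_mix_self_iff hγ0.le hγ1 hπ0 hπ1.le (by nlinarith) G F H).2 hG⟩

end Mix

theorem irreducible_wrt_contaminated_iff {X : Type*} [MeasurableSpace X]
    (π₁ : ℝ) (hπ₁ : π₁ ∈ Set.Icc (0:ℝ) 1)
    (P₀ P₁ : Measure X) [IsProbabilityMeasure P₀] [IsProbabilityMeasure P₁] :
    Irred P₀ (mix π₁ P₁ P₀) ↔ (Irred P₀ P₁ ∧ π₁ < 1) := by
  obtain ⟨hπ0, hπ1⟩ := hπ₁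
  rcases hπ1.lt_or_eq with hπ1 | rfl
  · simp [irred_mix_self_iff hπ0 hπ1, hπ1]
  · simp [not_irred_self]
end

section
/- Let π₀, π₁ ∈ [0,1) with π₀ + π₁ < 1. For a classifier f with true error rates R₀(f) = P₀(f=1) and R₁(f) = P₁(f=0), and contaminated error rates R̃₀(f) = (1-π₀)R₀(f) + π₀(1-R₁(f)) and R̃₁(f) = (1-π₁)R₁(f) + π₁(1-R₀(f)), one has, with π̃₀ = π₀/(1-π₁) and π̃₁ = π₁/(1-π₀): R₀(f) = 1 - R̃₁(f) - (1 - R̃₀(f) - R̃₁(f))/(1-π̃₀) and R₁(f) = 1 - R̃₀(f) - (1 - R̃₁(f) - R̃₀(f))/(1-π̃₁). -/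
/-!
Both contamination identities are affine in `(R₀, R₁)`, and
`1 - R̃₀ - R̃₁ = (1 - π₀ - π₁) (1 - R₀ - R₁)`, while `1 - π̃₀ = (1 - π₀ - π₁) / (1 - π₁)`.
So the correction term `(1 - R̃₀ - R̃₁) / (1 - π̃₀)` equals `(1 - π₁) (1 - R₀ - R₁)`, and subtracting it
from `1 - R̃₁` leaves `R₀`; the formula for `R₁` is the same one with the two classes swapped.
-/

variable {K : Type*} [Field K]

/-- The error rate of a class whose labels are flipped with probability `π`, where `R` is the true
error on that class and `R'` the true error on the other one. -/
def contaminatedError (π R R' : K) : K :=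
  (1 - π) * R + π * (1 - R')

lemma one_sub_contaminatedError_sub_contaminatedError (π₀ π₁ R₀ R₁ : K) :
    1 - contaminatedError π₀ R₀ R₁ - contaminatedError π₁ R₁ R₀ =
      (1 - π₀ - π₁) * (1 - R₀ - R₁) := by
  unfold contaminatedError
  ring

lemma one_sub_div_one_sub {a b : K} (hb : 1 - b ≠ 0) : 1 - a / (1 - b) = (1 - a - b) / (1 - b) := by
  field_simp
  ring

theorem eq_one_sub_contaminatedError_sub_div {π₀ π₁ R₀ R₁ : K} (hπ₁ : 1 - π₁ ≠ 0)
    (hπ : 1 - π₀ - π₁ ≠ 0) :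
    R₀ = 1 - contaminatedError π₁ R₁ R₀ -
      (1 - contaminatedError π₀ R₀ R₁ - contaminatedError π₁ R₁ R₀) / (1 - π₀ / (1 - π₁)) := by
  have correction :
      (1 - contaminatedError π₀ R₀ R₁ - contaminatedError π₁ R₁ R₀) / (1 - π₀ / (1 - π₁)) =
        (1 - π₁) * (1 - R₀ - R₁) := by
    rw [one_sub_contaminatedError_sub_contaminatedError, one_sub_div_one_sub hπ₁]
    field_simp
  rw [correction]
  unfold contaminatedError
  ring

theorem true_errors_from_contaminated_general (π₀ π₁ R₀ R₁ Rt₀ Rt₁ : ℝ)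
    (hπ₀ : π₀ ∈ Set.Ico (0:ℝ) 1) (hπ₁ : π₁ ∈ Set.Ico (0:ℝ) 1)
    (hsum : π₀ + π₁ < 1)
    (hRt₀ : Rt₀ = (1 - π₀) * R₀ + π₀ * (1 - R₁))
    (hRt₁ : Rt₁ = (1 - π₁) * R₁ + π₁ * (1 - R₀)) :
    R₀ = 1 - Rt₁ - (1 - Rt₀ - Rt₁) / (1 - π₀ / (1 - π₁)) ∧
    R₁ = 1 - Rt₀ - (1 - Rt₁ - Rt₀) / (1 - π₁ / (1 - π₀)) := by
  have h₀ : 1 - π₀ ≠ 0 := by linarith [hπ₀.2]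
  have h₁ : 1 - π₁ ≠ 0 := by linarith [hπ₁.2]
  have h₀₁ : 1 - π₀ - π₁ ≠ 0 := by linarith
  have h₁₀ : 1 - π₁ - π₀ ≠ 0 := by linarith
  change Rt₀ = contaminatedError π₀ R₀ R₁ at hRt₀
  change Rt₁ = contaminatedError π₁ R₁ R₀ at hRt₁
  subst hRt₀ hRt₁
  exact ⟨eq_one_sub_contaminatedError_sub_div h₁ h₀₁, eq_one_sub_contaminatedError_sub_div h₀ h₁₀⟩

theorem true_errors_from_contaminated (π₀ π₁ R₀ R₁ Rt₀ Rt₁ : ℝ)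
    (hπ₀ : π₀ ∈ Set.Ico (0:ℝ) 1) (hπ₁ : π₁ ∈ Set.Ico (0:ℝ) 1)
    (hsum : π₀ + π₁ < 1)
    (hR₀ : R₀ ∈ Set.Icc (0:ℝ) 1) (hR₁ : R₁ ∈ Set.Icc (0:ℝ) 1)
    (hRt₀ : Rt₀ = (1 - π₀) * R₀ + π₀ * (1 - R₁))
    (hRt₁ : Rt₁ = (1 - π₁) * R₁ + π₁ * (1 - R₀)) :
    R₀ = 1 - Rt₁ - (1 - Rt₀ - Rt₁) / (1 - π₀ / (1 - π₁)) ∧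
    R₁ = 1 - Rt₀ - (1 - Rt₁ - Rt₀) / (1 - π₁ / (1 - π₀)) :=
  true_errors_from_contaminated_general π₀ π₁ R₀ R₁ Rt₀ Rt₁ hπ₀ hπ₁ hsum hRt₀ hRt₁
end
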